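/- Let G = (N, Δ, π) be an infinite bottleneck congestion game, and define ψ : Δ → ℝ≥0^{n·m} by ψ_{i,f}(ξ) = c_f(ℓ_f(ξ)) if f ∈ F_i(ξ) and ψ_{i,f}(ξ) = 0 otherwise. Then G has the LIP both for φ = π and for ψ: for every improving move (ξ, (ν_S, ξ_{−S})) of any nonempty coalition S ⊆ N, the vector (π_i(ν_S, ξ_{−S}))_{i∈N} is strictly sorted-lexicographically smaller than (π_i(ξ))_{i∈N}, and ψ(ν_S, ξ_{−S}) is strictly sorted-lexicographically smaller than ψ(ξ). -/

import Mathlib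

open Finset

/-- The vector `a` sorted in non-increasing order. -/
noncomputable def sortDesc {α : Type*} [LinearOrder α] {q : ℕ} (a : Fin q → α) : Fin q → α :=
  fun i => a (Tuple.sort a i.rev)

/-- `a` is strictly sorted-lexicographically smaller than `b`. -/
def SLexLt {α : Type*} [LinearOrder α] {q : ℕ} (a b : Fin q → α) : Prop :=
  ∃ m : Fin q, (∀ i, i < m → sortDesc a i = sortDesc b i) ∧ sortDesc a m < sortDesc b m

/-- Sorted-lexicographic comparison of vectors indexed by an arbitrary finite type. -/
def SLexLtOn {α : Type*} [LinearOrder α] {ι : Type*} [Fintype ι] (a b : ι → α) : Prop :=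
  SLexLt (a ∘ (Fintype.equivFin ι).symm) (b ∘ (Fintype.equivFin ι).symm)

/-- An improving move: some nonempty coalition `S` deviates (players outside `S`
keep their strategies) and every member of `S` strictly decreases her cost. -/
def ImprovingMove {ι : Type*} {X : ι → Type*} {β : Type*} [Preorder β]
    (π : (∀ i, X i) → ι → β) (x y : ∀ i, X i) : Prop :=
  ∃ S : Finset ι, S.Nonempty ∧ (∀ i ∉ S, y i = x i) ∧ ∀ i ∈ S, π y i < π x i

open scoped NNReal

/-- The load of facility `f` under a splittable strategy profile `ξ`:
the sum of all intensities put on pure strategies containing `f`. -/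
noncomputable def facLoad {ι F : Type*} [Fintype ι] [Fintype F] [DecidableEq F] {ni : ι → ℕ}
    (strat : ∀ i, Fin (ni i) → Finset F) (ξ : ∀ i, Fin (ni i) → ℝ≥0) (f : F) : ℝ≥0 :=
  ∑ i, ∑ j ∈ Finset.univ.filter (fun j => f ∈ strat i j), ξ i j

/-- The set `F_i(ξ)` of facilities used by player `i` under profile `ξ`. -/
noncomputable def usedFac {ι F : Type*} [Fintype F] [DecidableEq F] {ni : ι → ℕ}
    (strat : ∀ i, Fin (ni i) → Finset F) (ξ : ∀ i, Fin (ni i) → ℝ≥0) (i : ι) : Finset F :=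
  Finset.univ.filter (fun f => ∃ j, f ∈ strat i j ∧ 0 < ξ i j)

/-- The private (bottleneck) cost `π_i(ξ) = max_{f ∈ F_i(ξ)} c_f(ℓ_f(ξ))` of
player `i` in an infinite bottleneck congestion game. -/
noncomputable def btlCost {ι F : Type*} [Fintype ι] [Fintype F] [DecidableEq F] {ni : ι → ℕ}
    (c : F → ℝ≥0 → ℝ≥0) (strat : ∀ i, Fin (ni i) → Finset F)
    (ξ : ∀ i, Fin (ni i) → ℝ≥0) (i : ι) : ℝ≥0 :=
  (usedFac strat ξ i).sup (fun f => c f (facLoad strat ξ f))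

/-!
Let `L` be the largest old cost among the deviating players. Each deviator ends strictly below
`L`, and only deviators can add load to a facility, so a facility whose new cost is at least `L`
has not gained load. Hence no entry of `π` or `ψ` that is at least `L` after the move has
increased, while the deviator (and the facility) that attained `L` now costs less than `L`.
A vector that is dominated entrywise above a level `L`, and has one entry dropping from at
least `L` to below `L`, is strictly smaller in the sorted lexicographical order.
-/

section SortedLex

variable {α : Type*} [LinearOrder α] {q : ℕ}

theorem sortDesc_antitone (a : Fin q → α) : Antitone (sortDesc a) :=
  fun _ _ hij => Tuple.monotone_sort a (Fin.rev_le_rev.mpr hij)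

theorem card_filter_le_sortDesc (a : Fin q → α) (s : α) :
    #{i | s ≤ sortDesc a i} = #{k | s ≤ a k} :=
  card_equiv (Fin.revPerm.trans (Tuple.sort a)) fun i => by
    simp only [mem_filter, mem_univ, true_and]; rfl

theorem slexLt_iff_toLex_lt (a b : Fin q → α) :
    SLexLt a b ↔ toLex (sortDesc a) < toLex (sortDesc b) :=
  Iff.rfl

theorem slexLt_of_card_le {a b : Fin q → α} (L : α)
    (hle : ∀ s, L ≤ s → #{k | s ≤ b k} ≤ #{k | s ≤ a k})
    (hlt : #{k | L ≤ b k} < #{k | L ≤ a k}) : SLexLt b a := by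
  set A := sortDesc a
  set B := sortDesc b
  replace hle : ∀ s, L ≤ s → #{i | s ≤ B i} ≤ #{i | s ≤ A i} := fun s hs => by
    rw [card_filter_le_sortDesc, card_filter_le_sortDesc]; exact hle s hs
  rw [← card_filter_le_sortDesc b, ← card_filter_le_sortDesc a] at hlt
  rw [slexLt_iff_toLex_lt]
  refine lt_of_not_ge fun hAB => ?_
  rcases hAB.lt_or_eq with ⟨m, hpre, hm⟩ | hAB
  -- Beyond the first difference `m`, every entry of `A` is below `B m`.
  · have hset : ∀ s, L ≤ s → B m ≤ s →
        ({i | s ≤ A i} : Finset (Fin q)) = ({i | s ≤ B i} : Finset (Fin q)) := by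
      intro s hLs hBs
      have hsub : ({i | s ≤ A i} : Finset _) ⊆ ({i | s ≤ B i} : Finset _) := by
        intro i hi
        rw [mem_filter] at hi ⊢
        have him : i < m := by
          by_contra! h
          exact ((sortDesc_antitone a h).trans_lt (hm.trans_le hBs)).not_ge hi.2
        exact ⟨mem_univ i, hi.2.trans_eq (hpre i him)⟩
      exact eq_of_subset_of_card_le hsub (hle s hLs)
    rcases le_total L (B m) with h | h
    · have hmA : m ∈ ({i | B m ≤ A i} : Finset _) := by
        rw [hset _ h le_rfl, mem_filter]; exact ⟨mem_univ m, le_rfl⟩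
      exact hm.not_ge (mem_filter.1 hmA).2
    · exact hlt.ne' (congrArg card (hset L le_rfl h))
  · rw [toLex_inj] at hAB
    exact hlt.ne (by rw [hAB])

theorem slexLt_of_le_above {a b : Fin q → α} (L : α) (hab : ∀ k, L ≤ b k → b k ≤ a k)
    (k₀ : Fin q) (hb : b k₀ < L) (ha : L ≤ a k₀) : SLexLt b a := by
  have hsub : ∀ s, L ≤ s → ({k | s ≤ b k} : Finset _) ⊆ ({k | s ≤ a k} : Finset _) :=
    fun s hs k hk => by
      rw [mem_filter] at hk ⊢
      exact ⟨hk.1, hk.2.trans (hab k (hs.trans hk.2))⟩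
  refine slexLt_of_card_le L (fun s hs => card_le_card (hsub s hs))
    (card_lt_card ⟨hsub L le_rfl, fun h => ?_⟩)
  exact hb.not_ge (mem_filter.1 (h (mem_filter.2 ⟨mem_univ k₀, ha⟩))).2

theorem slexLtOn_of_le_above {κ : Type*} [Fintype κ] {a b : κ → α} (L : α)
    (hab : ∀ k, L ≤ b k → b k ≤ a k) (k₀ : κ) (hb : b k₀ < L) (ha : L ≤ a k₀) :
    SLexLtOn b a :=
  slexLt_of_le_above L (fun k => hab _) (Fintype.equivFin κ k₀) (by simpa using hb)
    (by simpa using ha)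

end SortedLex

section BottleneckGame

/-- The vector `ψ(ξ)`, indexed by pairs (player, facility). -/
noncomputable def usedFacCost {ι F : Type*} [Fintype ι] [Fintype F] [DecidableEq F]
    {ni : ι → ℕ} (c : F → ℝ≥0 → ℝ≥0) (strat : ∀ i, Fin (ni i) → Finset F)
    (ξ : ∀ i, Fin (ni i) → ℝ≥0) (p : ι × F) : ℝ≥0 :=
  if p.2 ∈ usedFac strat ξ p.1 then c p.2 (facLoad strat ξ p.2) else 0

variable {ι F : Type*} [Fintype F] [DecidableEq F] {ni : ι → ℕ} {c : F → ℝ≥0 → ℝ≥0}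
  {strat : ∀ i, Fin (ni i) → Finset F} {ξ ν : ∀ i, Fin (ni i) → ℝ≥0} {L : ℝ≥0}

theorem usedFac_congr {i : ι} (h : ν i = ξ i) : usedFac strat ν i = usedFac strat ξ i := by
  simp only [usedFac, h]

variable [Fintype ι]

theorem le_btlCost_of_mem_usedFac {i : ι} {f : F} (hf : f ∈ usedFac strat ξ i) :
    c f (facLoad strat ξ f) ≤ btlCost c strat ξ i :=
  le_sup (f := fun f => c f (facLoad strat ξ f)) hf

theorem exists_mem_usedFac_eq_btlCost {i : ι} (h : 0 < btlCost c strat ξ i) :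
    ∃ f ∈ usedFac strat ξ i, c f (facLoad strat ξ f) = btlCost c strat ξ i := by
  obtain ⟨f, hf, hle⟩ := (Finset.le_sup_iff h).1 le_rfl
  exact ⟨f, hf, le_antisymm (le_btlCost_of_mem_usedFac hf) hle⟩

theorem usedFacCost_le_btlCost (p : ι × F) :
    usedFacCost c strat ξ p ≤ btlCost c strat ξ p.1 := by
  unfold usedFacCost
  split_ifs with h
  exacts [le_btlCost_of_mem_usedFac h, zero_le]

theorem exists_ne_mem_usedFac_of_facLoad_lt {f : F}
    (h : facLoad strat ξ f < facLoad strat ν f) :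
    ∃ i, ν i ≠ ξ i ∧ f ∈ usedFac strat ν i := by
  obtain ⟨i, -, hi⟩ := exists_lt_of_sum_lt h
  obtain ⟨j, hj, hlt⟩ := exists_lt_of_sum_lt hi
  exact ⟨i, fun hν => hlt.ne (by rw [hν]),
    mem_filter.2 ⟨mem_univ f, j, (mem_filter.1 hj).2, zero_le.trans_lt hlt⟩⟩

theorem facLoad_le_of_le_cost (hdev : ∀ i, ν i ≠ ξ i → btlCost c strat ν i < L) {f : F}
    (hf : L ≤ c f (facLoad strat ν f)) : facLoad strat ν f ≤ facLoad strat ξ f := by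
  by_contra! h
  obtain ⟨i, hi, hfi⟩ := exists_ne_mem_usedFac_of_facLoad_lt h
  exact (hf.trans (le_btlCost_of_mem_usedFac hfi)).not_gt (hdev i hi)

theorem usedFacCost_le_of_le (hc : ∀ f, Monotone (c f))
    (hdev : ∀ i, ν i ≠ ξ i → btlCost c strat ν i < L) {p : ι × F}
    (hp : L ≤ usedFacCost c strat ν p) :
    usedFacCost c strat ν p ≤ usedFacCost c strat ξ p := by
  obtain ⟨k, f⟩ := p
  by_cases hf : f ∈ usedFac strat ν k
  · have hk : ν k = ξ k := by
      by_contra hk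
      exact (hp.trans (usedFacCost_le_btlCost _)).not_gt (hdev k hk)
    have hfξ : f ∈ usedFac strat ξ k := by rwa [← usedFac_congr hk]
    simp only [usedFacCost, if_pos hf, if_pos hfξ] at hp ⊢
    exact hc f (facLoad_le_of_le_cost hdev hp)
  · simp [usedFacCost, hf]

theorem btlCost_le_of_le (hc : ∀ f, Monotone (c f))
    (hdev : ∀ i, ν i ≠ ξ i → btlCost c strat ν i < L) (hL : 0 < L) {k : ι}
    (hk : L ≤ btlCost c strat ν k) : btlCost c strat ν k ≤ btlCost c strat ξ k := by
  obtain ⟨f, hf, hcost⟩ := exists_mem_usedFac_eq_btlCost (hL.trans_le hk)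
  have hψ : usedFacCost c strat ν (k, f) = btlCost c strat ν k := by
    simp [usedFacCost, hf, hcost]
  calc btlCost c strat ν k = usedFacCost c strat ν (k, f) := hψ.symm
    _ ≤ usedFacCost c strat ξ (k, f) := usedFacCost_le_of_le hc hdev (hψ ▸ hk)
    _ ≤ btlCost c strat ξ k := usedFacCost_le_btlCost _

end BottleneckGame

theorem stmt_15_general {ι F : Type*} [Fintype ι] [Fintype F]
    [DecidableEq F] {ni : ι → ℕ}
    (strat : ∀ i, Fin (ni i) → Finset F)
    (d : ι → ℝ≥0)
    (c : F → ℝ≥0 → ℝ≥0) (hc : ∀ f, Monotone (c f)) :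
    ∀ ξ ν : ∀ i, Fin (ni i) → ℝ≥0,
      (∀ i, ∑ j, ξ i j = d i) → (∀ i, ∑ j, ν i j = d i) →
      ImprovingMove (btlCost c strat) ξ ν →
      SLexLtOn (btlCost c strat ν) (btlCost c strat ξ) ∧
      SLexLtOn
        (fun p : ι × F => if p.2 ∈ usedFac strat ν p.1 then c p.2 (facLoad strat ν p.2) else 0)
        (fun p : ι × F => if p.2 ∈ usedFac strat ξ p.1 then c p.2 (facLoad strat ξ p.2) else 0) := by
  rintro ξ ν - - ⟨S, hS, hout, himp⟩
  obtain ⟨i₀, hi₀, hL⟩ := exists_mem_eq_sup' hS (btlCost c strat ξ)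
  have hdev : ∀ i, ν i ≠ ξ i → btlCost c strat ν i < btlCost c strat ξ i₀ := fun i hi =>
    have hiS : i ∈ S := by_contra fun h => hi (hout i h)
    (himp i hiS).trans_le (hL ▸ le_sup' _ hiS)
  have hL0 : 0 < btlCost c strat ξ i₀ := zero_le.trans_lt (himp i₀ hi₀)
  constructor
  · exact slexLtOn_of_le_above _ (fun _ => btlCost_le_of_le hc hdev hL0) i₀ (himp i₀ hi₀) le_rfl
  · obtain ⟨f₀, hf₀, hcost⟩ := exists_mem_usedFac_eq_btlCost hL0
    refine slexLtOn_of_le_above (a := usedFacCost c strat ξ) (b := usedFacCost c strat ν) _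
      (fun _ => usedFacCost_le_of_le hc hdev) (i₀, f₀)
      ((usedFacCost_le_btlCost _).trans_lt (himp i₀ hi₀)) ?_
    simp [usedFacCost, hf₀, hcost]

/-- An infinite bottleneck congestion game has the LIP both
for `φ = π` and for `ψ_{i,f}(ξ) = c_f(ℓ_f(ξ))` if `f ∈ F_i(ξ)` and `0`
otherwise: both strictly decrease in the sorted lexicographical order along
every improving move between feasible profiles. -/
theorem stmt_15 {ι F : Type*} [Fintype ι] [Nonempty ι] [Fintype F] [Nonempty F]
    [DecidableEq F] {ni : ι → ℕ} (hni : ∀ i, 0 < ni i)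
    (strat : ∀ i, Fin (ni i) → Finset F) (hstrat : ∀ i j, (strat i j).Nonempty)
    (d : ι → ℝ≥0) (hd : ∀ i, 0 < d i)
    (c : F → ℝ≥0 → ℝ≥0) (hc : ∀ f, Monotone (c f)) :
    ∀ ξ ν : ∀ i, Fin (ni i) → ℝ≥0,
      (∀ i, ∑ j, ξ i j = d i) → (∀ i, ∑ j, ν i j = d i) →
      ImprovingMove (btlCost c strat) ξ ν →
      SLexLtOn (btlCost c strat ν) (btlCost c strat ξ) ∧
      SLexLtOn
        (fun p : ι × F => if p.2 ∈ usedFac strat ν p.1 then c p.2 (facLoad strat ν p.2) else 0)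
        (fun p : ι × F => if p.2 ∈ usedFac strat ξ p.1 then c p.2 (facLoad strat ξ p.2) else 0) :=
  stmt_15_general strat d c hc
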